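/- If λ_r is a non-real eigenvalue of the Sturm–Liouville problem with eigenfunction y_r and cλ_r+d ≠ 0, then ‖y_r‖² = ∫₀¹ |y_r(x)|² dx = -(ad-bc)·|y_r(1)|² / ((cλ_r+d)(c·conj(λ_r)+d)). In particular, since ad-bc < 0, this shows y_r(1) ≠ 0 for non-real eigenvalues. -/

import Mathlib

open MeasureTheory Set

/-- Corollary 2.2: the squared L²-norm of an eigenfunction corresponding to a non-real
eigenvalue `λr`, and in particular `yr(1) ≠ 0` (since `ad-bc < 0`). -/
theorem norm_eigenfunction_nonreal
    (a b c d β : ℝ) (habcd : a * d - b * c < 0) (hac : a * c ≠ 0)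
    (hβ0 : 0 ≤ β) (hβπ : β < Real.pi)
    (q : ℝ → ℝ) (hq : ContinuousOn q (Icc (0:ℝ) 1))
    (lamr : ℂ) (hnonreal : lamr.im ≠ 0) (hcr : c * lamr + d ≠ 0)
    (yr yr' yr'' : ℝ → ℂ)
    (hyr : ∀ x ∈ Icc (0:ℝ) 1, HasDerivAt yr (yr' x) x)
    (hyr' : ∀ x ∈ Icc (0:ℝ) 1, HasDerivAt yr' (yr'' x) x)
    (hyr'' : ContinuousOn yr'' (Icc (0:ℝ) 1))
    (hode : ∀ x ∈ Icc (0:ℝ) 1, -yr'' x + (q x : ℂ) * yr x = lamr * yr x)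
    (hbc0 : yr 0 * (Real.cos β : ℂ) = yr' 0 * (Real.sin β : ℂ))
    (hbc1 : (a * lamr + b) * yr 1 = (c * lamr + d) * yr' 1)
    (hne : ∃ x ∈ Icc (0:ℝ) 1, yr x ≠ 0) :
    (∫ x in (0:ℝ)..1, yr x * (starRingEnd ℂ) (yr x)
      = -((a * d - b * c : ℝ) : ℂ) * (yr 1 * (starRingEnd ℂ) (yr 1))
          / ((c * lamr + d) * (c * (starRingEnd ℂ) lamr + d)))
    ∧ yr 1 ≠ 0 := by
  have huIcc : uIcc (0:ℝ) 1 = Icc 0 1 := uIcc_of_le zero_le_one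
  have hyc : ContinuousOn yr (Icc (0:ℝ) 1) := fun x hx =>
    (hyr x hx).continuousAt.continuousWithinAt
  have hyc' : ContinuousOn yr' (Icc (0:ℝ) 1) := fun x hx =>
    (hyr' x hx).continuousAt.continuousWithinAt
  -- the Wronskian-type function
  set g : ℝ → ℂ := fun x =>
    yr' x * (starRingEnd ℂ) (yr x) - yr x * (starRingEnd ℂ) (yr' x) with hgdef
  set g' : ℝ → ℂ := fun x =>
    ((starRingEnd ℂ) lamr - lamr) * (yr x * (starRingEnd ℂ) (yr x)) with hg'def
  have hderiv : ∀ x ∈ Icc (0:ℝ) 1, HasDerivAt g (g' x) x := by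
    intro x hx
    have h1 : HasDerivAt g
        (yr'' x * (starRingEnd ℂ) (yr x) + yr' x * (starRingEnd ℂ) (yr' x)
          - (yr' x * (starRingEnd ℂ) (yr' x) + yr x * (starRingEnd ℂ) (yr'' x))) x := by
      have ha := ((hyr' x hx).mul ((hyr x hx).star)).sub ((hyr x hx).mul ((hyr' x hx).star))
      exact ha
    have hqx : yr'' x = (q x : ℂ) * yr x - lamr * yr x := by
      have := hode x hx; linear_combination -this
    convert h1 using 1
    rw [hqx]
    simp only [hg'def, map_sub, map_mul, Complex.conj_ofReal]
    ring
  have hcint : ContinuousOn (fun x => yr x * (starRingEnd ℂ) (yr x)) (Icc (0:ℝ) 1) := by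
    exact hyc.mul (continuous_star.comp_continuousOn hyc)
  have hint : IntervalIntegrable g' volume 0 1 := by
    apply ContinuousOn.intervalIntegrable
    rw [huIcc]
    exact continuousOn_const.mul hcint
  have hftc : ∫ x in (0:ℝ)..1, g' x = g 1 - g 0 :=
    intervalIntegral.integral_eq_sub_of_hasDerivAt
      (fun x hx => hderiv x (huIcc ▸ hx)) hint
  -- boundary value at 0 vanishes
  have hg0 : g 0 = 0 := by
    rcases eq_or_ne (Real.sin β) 0 with hs | hs
    · have hβ : β = 0 := by
        have := (Real.sin_eq_zero_iff_of_lt_of_lt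
          (lt_of_lt_of_le (neg_neg_iff_pos.mpr Real.pi_pos) hβ0) hβπ).mp hs
        exact this
      have h0 : yr 0 = 0 := by
        have := hbc0
        rw [hβ] at this
        simpa using this
      simp [hgdef, h0]
    · have hsC : ((Real.sin β : ℝ) : ℂ) ≠ 0 := Complex.ofReal_ne_zero.mpr hs
      have h0 : yr' 0 = yr 0 * (Real.cos β : ℂ) / (Real.sin β : ℂ) := by
        rw [eq_div_iff hsC]; linear_combination -hbc0
      simp only [hgdef, h0]
      rw [map_div₀]
      simp only [map_mul, Complex.conj_ofReal]
      field_simp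
      ring
  -- conjugate denominators
  have hcr' : c * (starRingEnd ℂ) lamr + d ≠ 0 := by
    intro h
    apply hcr
    have := congrArg (starRingEnd ℂ) h
    simpa [map_add, map_mul, Complex.conj_ofReal, Complex.conj_conj] using this
  -- boundary value at 1
  have h1' : yr' 1 = (a * lamr + b) * yr 1 / (c * lamr + d) := by
    rw [eq_div_iff hcr]; linear_combination -hbc1
  have hg1 : g 1 * ((c * lamr + d) * (c * (starRingEnd ℂ) lamr + d))
      = ((a * d - b * c : ℝ) : ℂ) * (lamr - (starRingEnd ℂ) lamr)
          * (yr 1 * (starRingEnd ℂ) (yr 1)) := by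
    simp only [hgdef, h1']
    rw [map_div₀]
    simp only [map_mul, map_add, Complex.conj_ofReal]
    simp only [div_eq_mul_inv]
    push_cast
    linear_combination ((a * lamr + b) * yr 1 * (starRingEnd ℂ) (yr 1) * (c * (starRingEnd ℂ) lamr + d)) * mul_inv_cancel₀ hcr - (yr 1 * (a * (starRingEnd ℂ) lamr + b) * (starRingEnd ℂ) (yr 1) * (c * lamr + d)) * mul_inv_cancel₀ hcr'
  -- pull the constant out of the integral
  set I : ℂ := ∫ x in (0:ℝ)..1, yr x * (starRingEnd ℂ) (yr x) with hIdef
  have hpull : ∫ x in (0:ℝ)..1, g' x = ((starRingEnd ℂ) lamr - lamr) * I := by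
    simp only [hg'def]
    rw [intervalIntegral.integral_const_mul]
  have hlamne : (starRingEnd ℂ) lamr - lamr ≠ 0 := by
    rw [sub_ne_zero]
    intro h
    exact hnonreal (Complex.conj_eq_iff_im.mp h)
  have hmain : I = -((a * d - b * c : ℝ) : ℂ) * (yr 1 * (starRingEnd ℂ) (yr 1))
      / ((c * lamr + d) * (c * (starRingEnd ℂ) lamr + d)) := by
    have key : ((starRingEnd ℂ) lamr - lamr)
        * (I * ((c * lamr + d) * (c * (starRingEnd ℂ) lamr + d)))
        = ((starRingEnd ℂ) lamr - lamr)
          * (-((a * d - b * c : ℝ) : ℂ) * (yr 1 * (starRingEnd ℂ) (yr 1))) := by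
      have e1 : ((starRingEnd ℂ) lamr - lamr) * I = g 1 - g 0 := by
        rw [← hpull, hftc]
      rw [hg0, sub_zero] at e1
      linear_combination ((c * lamr + d) * (c * (starRingEnd ℂ) lamr + d)) * e1 + hg1
    have key2 := mul_left_cancel₀ hlamne key
    rw [eq_div_iff (mul_ne_zero hcr hcr')]
    exact key2
  refine ⟨hmain, ?_⟩
  -- positivity of the norm integral
  obtain ⟨x₀, hx₀, hx₀ne⟩ := hne
  have hnormSqc : ContinuousOn (fun x => Complex.normSq (yr x)) (Icc (0:ℝ) 1) :=
    Complex.continuous_normSq.comp_continuousOn hyc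
  have hIpos : 0 < ∫ x in (0:ℝ)..1, Complex.normSq (yr x) := by
    have := intervalIntegral.integral_lt_integral_of_continuousOn_of_le_of_exists_lt
      (f := fun _ => (0:ℝ)) (g := fun x => Complex.normSq (yr x)) zero_lt_one
      continuousOn_const hnormSqc (fun x _ => Complex.normSq_nonneg _)
      ⟨x₀, hx₀, Complex.normSq_pos.mpr hx₀ne⟩
    simpa using this
  have hIreal : I = ((∫ x in (0:ℝ)..1, Complex.normSq (yr x) : ℝ) : ℂ) := by
    rw [hIdef, ← intervalIntegral.integral_ofReal]
    congr 1
    funext x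
    rw [Complex.mul_conj]
  intro h1eq0
  have : I = 0 := by rw [hmain, h1eq0]; simp
  rw [hIreal] at this
  exact absurd (Complex.ofReal_eq_zero.mp this) (ne_of_gt hIpos)
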